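/- Let u >_lex v be Lyndon words with u of length at least 2 and Shirshov factorization sh(u) = (u', u''). Then the Shirshov factorization of the Lyndon word uv is (u, v) if and only if u'' ≤_lex v. -/
import Mathlib


variable {X : Type*} [LinearOrder X]

/-- The lexicographical order of the paper: `u <_lex v` iff the words first differ with the
letter of `u` smaller, or `v` is a proper prefix of `u`. -/
def LexLt (u v : List X) : Prop :=
  (∃ (r s t : List X) (a b : X), a < b ∧ u = r ++ a :: s ∧ v = r ++ b :: t) ∨
    (v <+: u ∧ v ≠ u)

/-- A word `u` is Lyndon if it is nonempty and `u >_lex w ++ v` for every factorization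
`u = v ++ w` with `v, w` nonempty. -/
def IsLyndon (u : List X) : Prop :=
  u ≠ [] ∧ ∀ v w : List X, u = v ++ w → v ≠ [] → w ≠ [] → LexLt (w ++ v) u

/-- `(u', u'')` is the Shirshov factorization of `u`: `u = u' ++ u''` where `u''` is the
longest proper Lyndon suffix of `u`. -/
def IsShirshov (u u1 u2 : List X) : Prop :=
  u = u1 ++ u2 ∧ u1 ≠ [] ∧ u2 ≠ [] ∧ IsLyndon u2 ∧
    ∀ s : List X, s <:+ u → s ≠ u → IsLyndon s → s.length ≤ u2.length

/-- The strict first-difference comparison (the first clause of `LexLt`). -/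
def SLt (u v : List X) : Prop :=
  ∃ (r s t : List X) (a b : X), a < b ∧ u = r ++ a :: s ∧ v = r ++ b :: t

lemma SLt.not_nil_left {v : List X} (h : SLt [] v) : False := by
  obtain ⟨r, s, t, a, b, _, h1, _⟩ := h
  exact List.cons_ne_nil a s (List.append_eq_nil_iff.mp h1.symm).2

lemma SLt.not_nil_right {u : List X} (h : SLt u []) : False := by
  obtain ⟨r, s, t, a, b, _, _, h2⟩ := h
  exact List.cons_ne_nil b t (List.append_eq_nil_iff.mp h2.symm).2

lemma slt_cons_iff {a b : X} {u v : List X} :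
    SLt (a :: u) (b :: v) ↔ a < b ∨ (a = b ∧ SLt u v) := by
  constructor
  · rintro ⟨r, s, t, c, d, hcd, hu, hv⟩
    cases r with
    | nil =>
      simp only [List.nil_append, List.cons.injEq] at hu hv
      exact Or.inl (hu.1 ▸ hv.1 ▸ hcd)
    | cons e r =>
      simp only [List.cons_append, List.cons.injEq] at hu hv
      exact Or.inr ⟨hu.1.trans hv.1.symm, r, s, t, c, d, hcd, hu.2, hv.2⟩
  · rintro (hab | ⟨rfl, r, s, t, c, d, hcd, rfl, rfl⟩)
    · exact ⟨[], u, v, a, b, hab, rfl, rfl⟩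
    · exact ⟨a :: r, s, t, c, d, hcd, rfl, rfl⟩

lemma SLt.append {u v : List X} (h : SLt u v) (x y : List X) : SLt (u ++ x) (v ++ y) := by
  obtain ⟨r, s, t, a, b, hab, rfl, rfl⟩ := h
  exact ⟨r, s ++ x, t ++ y, a, b, hab, by simp, by simp⟩

lemma SLt.append_left {u v : List X} (h : SLt u v) (x : List X) : SLt (u ++ x) v := by
  have := h.append x []
  simpa using this

lemma SLt.append_right {u v : List X} (h : SLt u v) (y : List X) : SLt u (v ++ y) := by
  have := h.append [] y
  simpa using this

lemma SLt.prepend {u v : List X} (h : SLt u v) (c : List X) : SLt (c ++ u) (c ++ v) := by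
  obtain ⟨r, s, t, a, b, hab, rfl, rfl⟩ := h
  exact ⟨c ++ r, s, t, a, b, hab, by simp, by simp⟩

lemma slt_of_prepend {u v : List X} : ∀ (c : List X), SLt (c ++ u) (c ++ v) → SLt u v := by
  intro c
  induction c with
  | nil => exact fun h => h
  | cons a c ih =>
    intro h
    rw [List.cons_append, List.cons_append, slt_cons_iff] at h
    rcases h with h | ⟨_, h⟩
    · exact absurd h (lt_irrefl a)
    · exact ih h

lemma SLt.asymm {u : List X} : ∀ {v : List X}, SLt u v → SLt v u → False := by
  induction u with
  | nil => exact fun h _ => h.not_nil_left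
  | cons a u ih =>
    intro v h1 h2
    cases v with
    | nil => exact h1.not_nil_right
    | cons b v =>
      rw [slt_cons_iff] at h1 h2
      rcases h1 with h1 | ⟨rfl, h1⟩ <;> rcases h2 with h2 | ⟨he, h2⟩
      · exact absurd h2 (lt_asymm h1)
      · exact absurd h1 (he ▸ lt_irrefl b)
      · exact absurd h2 (lt_irrefl a)
      · exact ih h1 h2

lemma SLt.trans {u : List X} : ∀ {v w : List X}, SLt u v → SLt v w → SLt u w := by
  induction u with
  | nil => exact fun h _ => absurd h SLt.not_nil_left
  | cons a u ih =>
    intro v w h1 h2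
    cases v with
    | nil => exact absurd h1 SLt.not_nil_right
    | cons b v =>
      cases w with
      | nil => exact absurd h2 SLt.not_nil_right
      | cons c w =>
        rw [slt_cons_iff] at h1 h2 ⊢
        rcases h1 with h1 | ⟨rfl, h1⟩ <;> rcases h2 with h2 | ⟨he, h2⟩
        · exact Or.inl (h1.trans h2)
        · exact Or.inl (he ▸ h1)
        · exact Or.inl h2
        · exact Or.inr ⟨he, ih h1 h2⟩

lemma slt_trichotomy (u : List X) : ∀ v : List X, SLt u v ∨ SLt v u ∨ u <+: v ∨ v <+: u := by
  induction u with
  | nil => exact fun v => Or.inr (Or.inr (Or.inl (List.nil_prefix)))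
  | cons a u ih =>
    intro v
    cases v with
    | nil => exact Or.inr (Or.inr (Or.inr List.nil_prefix))
    | cons b v =>
      rcases lt_trichotomy a b with h | rfl | h
      · exact Or.inl (slt_cons_iff.2 (Or.inl h))
      · rcases ih v with h | h | h | h
        · exact Or.inl (slt_cons_iff.2 (Or.inr ⟨rfl, h⟩))
        · exact Or.inr (Or.inl (slt_cons_iff.2 (Or.inr ⟨rfl, h⟩)))
        · exact Or.inr (Or.inr (Or.inl (List.cons_prefix_cons.2 ⟨rfl, h⟩)))
        · exact Or.inr (Or.inr (Or.inr (List.cons_prefix_cons.2 ⟨rfl, h⟩)))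
      · exact Or.inr (Or.inl (slt_cons_iff.2 (Or.inl h)))

lemma SLt.not_prefix {u v : List X} (h : SLt u v) (hp : u <+: v) : False := by
  obtain ⟨r, s, t, a, b, hab, rfl, hv⟩ := h
  obtain ⟨m, rfl⟩ := hp
  rw [List.append_assoc, List.cons_append] at hv
  have := List.append_cancel_left hv
  exact absurd (List.head_eq_of_cons_eq this) (ne_of_lt hab)

lemma SLt.not_prefix' {u v : List X} (h : SLt u v) (hp : v <+: u) : False := by
  obtain ⟨r, s, t, a, b, hab, hu, rfl⟩ := h
  obtain ⟨m, rfl⟩ := hp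
  rw [List.append_assoc, List.cons_append] at hu
  have := List.append_cancel_left hu.symm
  exact absurd (List.head_eq_of_cons_eq this) (ne_of_lt hab)

/-- If `x` is a prefix of `y = r ++ b :: t` and longer than `r`, then `x = r ++ b :: t'`. -/
lemma prefix_extract {b : X} : ∀ {r x y t : List X}, x <+: y → y = r ++ b :: t →
    r.length < x.length → ∃ t', x = r ++ b :: t' := by
  intro r
  induction r with
  | nil =>
    intro x y t hp hy hr
    subst hy
    cases x with
    | nil => simp at hr
    | cons c x =>
      obtain ⟨rfl, _⟩ := List.cons_prefix_cons.1 hp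
      exact ⟨x, rfl⟩
  | cons e r ih =>
    intro x y t hp hy hr
    subst hy
    cases x with
    | nil => simp at hr
    | cons c x =>
      rw [List.cons_append] at hp
      obtain ⟨rfl, h⟩ := List.cons_prefix_cons.1 hp
      obtain ⟨t', rfl⟩ := ih h rfl (by simpa using Nat.lt_of_succ_lt_succ hr)
      exact ⟨t', rfl⟩

lemma append_split {p s u v : List X} (h : p ++ s = u ++ v) (hle : p.length ≤ u.length) :
    ∃ t, u = p ++ t ∧ s = t ++ v := by
  have h2 : p ++ s = u.take p.length ++ (u.drop p.length ++ v) := by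
    rw [← List.append_assoc, List.take_append_drop]; exact h
  obtain ⟨h3, h4⟩ := List.append_inj h2 (by simp [List.length_take]; omega)
  refine ⟨u.drop p.length, ?_, h4⟩
  conv_lhs => rw [← List.take_append_drop p.length u]
  rw [← h3]

lemma suffix_of_suffix_le {l₁ l₂ l₃ : List X} (h1 : l₁ <:+ l₃) (h2 : l₂ <:+ l₃)
    (h : l₁.length ≤ l₂.length) : l₁ <:+ l₂ := by
  rw [← List.reverse_prefix] at h1 h2 ⊢
  exact List.prefix_of_prefix_length_le h1 h2 (by simpa using h)

lemma SLt.lexLt {u v : List X} (h : SLt u v) : LexLt u v := Or.inl h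

lemma LexLt.out {u v : List X} (h : LexLt u v) : SLt u v ∨ (v <+: u ∧ v ≠ u) := h

lemma slt_of_lexLt {u v : List X} (h : LexLt u v) (hl : u.length = v.length) : SLt u v := by
  rcases h with h | ⟨hp, hne⟩
  · exact h
  · exact absurd (hp.eq_of_length (by omega)) hne

lemma lexLt_irrefl {u : List X} (h : LexLt u u) : False := by
  rcases h.out with h | ⟨_, hne⟩
  · exact h.not_prefix (List.prefix_refl _)
  · exact hne rfl

lemma lexLt_asymm {u v : List X} (h1 : LexLt u v) (h2 : LexLt v u) : False := by
  rcases h1.out with h1 | ⟨hp1, hne1⟩ <;> rcases h2.out with h2 | ⟨hp2, hne2⟩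
  · exact h1.asymm h2
  · exact h1.not_prefix hp2
  · exact h2.not_prefix hp1
  · exact hne1 (hp1.eq_of_length (le_antisymm hp1.length_le hp2.length_le))

lemma lexLt_trichotomy (u v : List X) : LexLt u v ∨ u = v ∨ LexLt v u := by
  rcases slt_trichotomy u v with h | h | h | h
  · exact Or.inl (Or.inl h)
  · exact Or.inr (Or.inr (Or.inl h))
  · rcases eq_or_ne u v with rfl | hne
    · exact Or.inr (Or.inl rfl)
    · exact Or.inr (Or.inr (Or.inr ⟨h, hne⟩))
  · rcases eq_or_ne v u with rfl | hne
    · exact Or.inr (Or.inl rfl)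
    · exact Or.inl (Or.inr ⟨h, hne⟩)

lemma lexLt_trans {x y z : List X} (h1 : LexLt x y) (h2 : LexLt y z) : LexLt x z := by
  rcases h1.out with h1 | ⟨hp1, hne1⟩ <;> rcases h2.out with h2 | ⟨hp2, hne2⟩
  · exact Or.inl (h1.trans h2)
  · -- h1 : SLt x y, hp2 : z <+: y
    obtain ⟨r, s, t, a, b, hab, rfl, hy⟩ := h1
    rcases lt_or_ge r.length z.length with hr | hr
    · obtain ⟨t', rfl⟩ := prefix_extract hp2 hy hr
      exact Or.inl ⟨r, s, t', a, b, hab, rfl, rfl⟩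
    · have hrpre : r <+: y := hy ▸ ⟨b :: t, rfl⟩
      have hzr : z <+: r := List.prefix_of_prefix_length_le hp2 hrpre hr
      have hzx : z <+: r ++ a :: s := hzr.trans ⟨a :: s, rfl⟩
      rcases eq_or_ne z (r ++ a :: s) with he | hne
      · exact absurd (he ▸ hp2) (fun hp => SLt.not_prefix ⟨r, s, t, a, b, hab, rfl, hy⟩ hp)
      · exact Or.inr ⟨hzx, hne⟩
  · -- hp1 : y <+: x, h2 : SLt y z
    obtain ⟨m, rfl⟩ := hp1
    exact Or.inl (h2.append_left m)
  · obtain ⟨m, rfl⟩ := hp1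
    obtain ⟨k, rfl⟩ := hp2
    have hm : m ≠ [] := by rintro rfl; exact hne1 (by simp)
    refine Or.inr ⟨⟨k ++ m, by simp⟩, fun h => hm ?_⟩
    have hl := congrArg List.length h
    rw [List.length_append, List.length_append] at hl
    exact List.eq_nil_of_length_eq_zero (by omega)

/-- Every proper nonempty suffix of a Lyndon word is strictly smaller via first difference. -/
lemma slt_of_suffix_of_isLyndon {u p w : List X} (hu : IsLyndon u) (hdecomp : u = p ++ w)
    (hp : p ≠ []) (hw : w ≠ []) : SLt w u := by
  have hrot := hu.2 p w hdecomp hp hw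
  have hlen : (w ++ p).length = u.length := by simp [hdecomp]; omega
  have hslt : SLt (w ++ p) u := slt_of_lexLt hrot hlen
  rcases slt_trichotomy w u with h | h | h | h
  · exact h
  · exact absurd (h.append_right p) (fun h' => (hslt.asymm h').elim)
  · obtain ⟨y, hy⟩ := h
    have hyne : y ≠ [] := by
      rintro rfl
      have h1 := congrArg List.length hy
      have h2 := congrArg List.length hdecomp
      simp only [List.length_append, List.length_nil] at h1 h2
      have hp' : 0 < p.length := List.length_pos_iff.2 hp
      omega
    have hslt2 : SLt (w ++ p) (w ++ y) := by rw [← hy] at hslt; exact hslt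
    have hpy : SLt p y := slt_of_prepend w hslt2
    have h1 : SLt (p ++ w) (y ++ w) := hpy.append w w
    rw [← hdecomp] at h1
    have hrot2 := hu.2 w y hy.symm hw hyne
    have h2 : SLt (y ++ w) u := slt_of_lexLt hrot2 (by simp [← hy]; omega)
    exact absurd h2 (fun h' => (h1.asymm h').elim)
  · have h1 := h.length_le
    have hp' : 0 < p.length := List.length_pos_iff.2 hp
    have h2 : u.length = p.length + w.length := by simp [hdecomp]
    omega

lemma isLyndon_of_forall_suffix {u : List X} (hne : u ≠ [])
    (H : ∀ p w, u = p ++ w → p ≠ [] → w ≠ [] → SLt w u) : IsLyndon u := by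
  refine ⟨hne, fun p w h hp hw => ?_⟩
  exact ((H p w h hp hw).append_left p).lexLt

/-- If `u >_lex v` are Lyndon then `u ++ v` is Lyndon. -/
lemma isLyndon_append {x y : List X} (hx : IsLyndon x) (hy : IsLyndon y) (hlt : LexLt y x) :
    IsLyndon (x ++ y) := by
  have hyx : SLt y (x ++ y) := by
    rcases hlt.out with h | ⟨hp, hne⟩
    · exact h.append_right y
    · obtain ⟨z, rfl⟩ := hp
      have hz : z ≠ [] := by rintro rfl; exact hne (by simp)
      exact (slt_of_suffix_of_isLyndon hy rfl hx.1 hz).prepend x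
  refine isLyndon_of_forall_suffix (by simp [hx.1]) ?_
  intro p w hpw hp hw
  rcases le_or_gt w.length y.length with hle | hgt
  · have hwsuf : w <:+ y := suffix_of_suffix_le ⟨p, hpw.symm⟩ ⟨x, rfl⟩ hle
    rcases eq_or_ne w y with rfl | hne
    · exact hyx
    · obtain ⟨p', hp'⟩ := hwsuf
      have hp'ne : p' ≠ [] := by rintro rfl; exact hne (by simpa using hp')
      exact (slt_of_suffix_of_isLyndon hy hp'.symm hp'ne hw).trans hyx
  · have hplen : p.length ≤ x.length := by
      have := congrArg List.length hpw
      simp at this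
      omega
    obtain ⟨t, hxt, hwt⟩ := append_split hpw.symm hplen
    have htne : t ≠ [] := by
      rintro rfl
      rw [List.nil_append] at hwt
      subst hwt
      omega
    rw [hwt]
    exact (slt_of_suffix_of_isLyndon hx hxt hp htne).append y y

/-- If `x ++ y` is Lyndon with `x, y` nonempty then `y <_lex x`. -/
lemma lexLt_of_isLyndon_append {x y : List X} (h : IsLyndon (x ++ y)) (hx : x ≠ [])
    (hy : y ≠ []) : LexLt y x := by
  have hs : SLt y (x ++ y) := slt_of_suffix_of_isLyndon h rfl hx hy
  obtain ⟨r, s, t, a, b, hab, hyeq, hxy⟩ := hs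
  rcases lt_or_ge r.length x.length with hr | hr
  · obtain ⟨t', hx'⟩ := prefix_extract (⟨y, rfl⟩ : x <+: x ++ y) hxy hr
    exact Or.inl ⟨r, s, t', a, b, hab, hyeq, hx'⟩
  · have hrp : r <+: x ++ y := hxy ▸ ⟨b :: t, rfl⟩
    have hxr : x <+: r := List.prefix_of_prefix_length_le ⟨y, rfl⟩ hrp hr
    have hxyp : x <+: y := hxr.trans (hyeq ▸ ⟨a :: s, rfl⟩)
    rcases eq_or_ne x y with rfl | hne
    · exact absurd (⟨x, rfl⟩ : x <+: x ++ x)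
        (fun hp => SLt.not_prefix ⟨r, s, t, a, b, hab, hyeq, hxy⟩ hp)
    · exact Or.inr ⟨hxyp, hne⟩

/-- `u2` is the `LexLt`-greatest proper nonempty suffix of `u`. -/
lemma le_u2_of_suffix {u u1 u2 : List X} (hsh : IsShirshov u u1 u2) :
    ∀ t, t <:+ u → t ≠ [] → t ≠ u → LexLt t u2 ∨ t = u2 := by
  obtain ⟨hdecomp, hu1, hu2, hL2, hmax⟩ := hsh
  have hu2suf : u2 <:+ u := ⟨u1, hdecomp.symm⟩
  suffices H : ∀ n t, t.length = n → t <:+ u → t ≠ [] → t ≠ u → LexLt t u2 ∨ t = u2 by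
    exact fun t => H t.length t rfl
  intro n
  induction n using Nat.strong_induction_on with
  | _ n ih =>
    rintro t rfl hsuf htne htu
    rcases lt_trichotomy t.length u2.length with hlt | heq | hgt
    · left
      have hts : t <:+ u2 := suffix_of_suffix_le hsuf hu2suf hlt.le
      obtain ⟨p', hp'⟩ := hts
      have hp'ne : p' ≠ [] := by
        rintro rfl
        rw [List.nil_append] at hp'
        subst hp'
        omega
      exact (slt_of_suffix_of_isLyndon hL2 hp'.symm hp'ne htne).lexLt
    · right
      exact (suffix_of_suffix_le hsuf hu2suf heq.le).eq_of_length heq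
    · have hnl : ¬ IsLyndon t := fun h => absurd (hmax t hsuf htu h) (by omega)
      obtain ⟨p, w, hpw, hp, hw, hbad⟩ :
          ∃ p w, t = p ++ w ∧ p ≠ [] ∧ w ≠ [] ∧ ¬ SLt w t := by
        by_contra hcon
        push_neg at hcon
        exact hnl (isLyndon_of_forall_suffix htne fun p w h1 h2 h3 => hcon p w h1 h2 h3)
      have hwt_len : w.length < t.length := by
        have := congrArg List.length hpw
        have hp' : 0 < p.length := List.length_pos_iff.2 hp
        simp at this
        omega
      have hwsuf : w <:+ u := List.IsSuffix.trans ⟨p, hpw.symm⟩ hsuf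
      have htlen : t.length ≤ u.length := hsuf.length_le
      have hwu : w ≠ u := by
        intro h
        rw [h] at hwt_len
        omega
      have hw2 := ih w.length (by omega) w rfl hwsuf hw hwu
      rcases slt_trichotomy w t with hc | hc | hc | hc
      · exact absurd hc hbad
      · -- SLt t w
        rcases hw2 with hw2 | rfl
        · exact Or.inl (lexLt_trans hc.lexLt hw2)
        · exact Or.inl hc.lexLt
      · -- w <+: t
        rcases hw2 with hw2 | rfl
        · rcases hw2.out with hslt | ⟨hpre, _⟩
          · obtain ⟨y, hy⟩ := hc
            left
            exact (hy ▸ hslt.append_left y).lexLt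
          · left
            exact Or.inr ⟨hpre.trans hc, fun h => by rw [h] at hgt; omega⟩
        · left
          exact Or.inr ⟨hc, fun h => by rw [h] at hgt; omega⟩
      · exact absurd hc.length_le (by omega)

theorem shirshov_concat_iff (u v u1 u2 : List X) (hu : IsLyndon u) (hv : IsLyndon v)
    (hlt : LexLt v u) (hlen : 2 ≤ u.length) (hsh : IsShirshov u u1 u2) :
    IsShirshov (u ++ v) u v ↔ (LexLt u2 v ∨ u2 = v) := by
  obtain ⟨hdecomp, hu1, hu2, hL2, hmax⟩ := hsh
  constructor
  · intro hS
    rcases lexLt_trichotomy u2 v with h | h | h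
    · exact Or.inl h
    · exact Or.inr h
    · exfalso
      have hlyn : IsLyndon (u2 ++ v) := isLyndon_append hL2 hv h
      have hsuf : u2 ++ v <:+ u ++ v := ⟨u1, by rw [← List.append_assoc, ← hdecomp]⟩
      have hne : u2 ++ v ≠ u ++ v := by
        intro he
        have h2 : u2 = u := List.append_cancel_right he
        rw [hdecomp] at h2
        have hl := congrArg List.length h2
        rw [List.length_append] at hl
        have hp' : 0 < u1.length := List.length_pos_iff.2 hu1
        omega
      have hle := hS.2.2.2.2 (u2 ++ v) hsuf hne hlyn
      have hp' : 0 < u2.length := List.length_pos_iff.2 hu2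
      rw [List.length_append] at hle
      omega
  · intro h
    refine ⟨rfl, hu.1, hv.1, hv, ?_⟩
    intro s hsuf hne hlyn
    by_contra hlen'
    push_neg at hlen'
    obtain ⟨p, hp⟩ := hsuf
    have hplen : p.length ≤ u.length := by
      have := congrArg List.length hp
      simp at this
      omega
    obtain ⟨t, htu, hts⟩ := append_split hp hplen
    have hpne : p ≠ [] := by
      rintro rfl
      rw [List.nil_append] at hp
      exact hne hp
    have htne : t ≠ [] := by
      rintro rfl
      rw [List.nil_append] at hts
      subst hts
      omega
    have htnu : t ≠ u := by
      intro h'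
      rw [h'] at htu
      have hl := congrArg List.length htu
      rw [List.length_append] at hl
      have hp' : 0 < p.length := List.length_pos_iff.2 hpne
      omega
    have hm := le_u2_of_suffix ⟨hdecomp, hu1, hu2, hL2, hmax⟩ t ⟨p, htu.symm⟩ htne htnu
    have htv : LexLt t v ∨ t = v := by
      rcases hm with hm | rfl
      · rcases h with h | rfl
        · exact Or.inl (lexLt_trans hm h)
        · exact Or.inl hm
      · exact h
    have hvt : LexLt v t := lexLt_of_isLyndon_append (hts ▸ hlyn) htne hv.1
    rcases htv with htv | rfl
    · exact lexLt_asymm htv hvt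
    · exact lexLt_irrefl hvt
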